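/- For the language L_EQ(n) = { x #^n y : x, y ∈ {0,1}^n, x = y }, the 2DFA time-space complexity is Θ(n^2): there is a 2DFA recognizing L_EQ(n) with time O(n) and 2^{O(n)} states (so TS = O(n^2)), and every 2DFA recognizing L_EQ(n) has TS ≥ n · (D^cc(EQ_n) − 1) = n^2. -/

import Mathlib

/-!
Upper bound: a 2DFA whose state memorises the input read so far (a word of length at most `3n`
over a three-letter alphabet, hence `2^{O(n)}` states) sweeps once to the right end-marker and
decides there, after `3n + 2` steps.

Lower bound: the head is owned either by side `true`, which sees the positions `≤ 2n` (`x` and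
the `#`-block), or by side `false`, which sees the positions `≥ n + 1` (the `#`-block and `y`);
ownership changes only when the head leaves the owner's window, at position `2n + 1` or `n`.
Consecutive transfers are therefore `n + 1` steps apart, so `r` transfers cost `n + (n + 1) r`
steps. A run on `x #ⁿ y` can be pasted together from the runs on `x #ⁿ x` and `y #ⁿ y`
whenever these pass through the same states at their transfers, so `x ↦` (transfer states of
the accepting run on `x #ⁿ x`) is injective. As there are fewer than `2 Qʳ` lists of length
`≤ r` over `Q` states, `2ⁿ < 2 Qʳ` for the longest such list, i.e. `n - 1 < r log₂ Q`, and then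
`T log₂ Q ≥ (n + (n + 1) r) log₂ Q ≥ n²`.
-/

/-- A deterministic communication protocol tree: at each internal node one of the
two players computes a bit from her input and sends it. -/
inductive Protocol (X Y : Type) where
  | leaf : Bool → Protocol X Y
  | nodeA : (X → Bool) → Protocol X Y → Protocol X Y → Protocol X Y
  | nodeB : (Y → Bool) → Protocol X Y → Protocol X Y → Protocol X Y

namespace Protocol

/-- Communication cost (depth) of a protocol. -/
def depth {X Y : Type} : Protocol X Y → ℕ
  | .leaf _ => 0
  | .nodeA _ p q => max p.depth q.depth + 1
  | .nodeB _ p q => max p.depth q.depth + 1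

/-- Output of a protocol on input `(x, y)`. -/
def eval {X Y : Type} : Protocol X Y → X → Y → Bool
  | .leaf b, _, _ => b
  | .nodeA g p q, x, y => if g x then p.eval x y else q.eval x y
  | .nodeB g p q, x, y => if g y then p.eval x y else q.eval x y

end Protocol

/-- Deterministic communication complexity: least cost of a protocol computing `f`. -/
noncomputable def Dcc {X Y : Type} (f : X → Y → Bool) : ℕ :=
  sInf {c : ℕ | ∃ π : Protocol X Y, π.depth ≤ c ∧ ∀ x y, π.eval x y = f x y}

/-- A two-way deterministic finite automaton over alphabet `α`, with states
`Fin Q`, end-markers (`Sum.inr false` = left marker `⊢`, `Sum.inr true` = right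
marker `$`), and head moves in `{-1, 0, 1}`. -/
structure TwoDFA (α : Type) where
  Q : ℕ
  hQ : 0 < Q
  init : Fin Q
  accept : Finset (Fin Q)
  δ : Fin Q → (α ⊕ Bool) → Fin Q × ℤ
  hmove : ∀ q a, ((δ q a).2).natAbs ≤ 1

namespace TwoDFA

/-- The tape symbol at (integer) position `i` when the input word is `w`:
position `0` holds the left end-marker, position `w.length + 1` the right
end-marker, and positions `1, …, w.length` the symbols of `w`. -/
def symbolAt {α : Type} (w : List α) (i : ℤ) : α ⊕ Bool :=
  if i ≤ 0 then Sum.inr false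
  else if (w.length + 1 : ℤ) ≤ i then Sum.inr true
  else match w[i.toNat - 1]? with
    | some a => Sum.inl a
    | none => Sum.inr true

/-- One computation step on input `w`, from configuration (state, head position). -/
def step {α : Type} (M : TwoDFA α) (w : List α) (c : Fin M.Q × ℤ) : Fin M.Q × ℤ :=
  ((M.δ c.1 (symbolAt w c.2)).1, c.2 + (M.δ c.1 (symbolAt w c.2)).2)

/-- Configuration after `k` steps on input `w`, starting at the initial state
scanning the left end-marker. -/
def conf {α : Type} (M : TwoDFA α) (w : List α) (k : ℕ) : Fin M.Q × ℤ :=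
  (step M w)^[k] (M.init, 0)

/-- `M` recognizes `L` within time `T`: members of `L` are accepted within `T`
steps, and non-members are never accepted. -/
def Recognizes {α : Type} (M : TwoDFA α) (L : Set (List α)) (T : ℕ) : Prop :=
  ∀ w : List α,
    (w ∈ L ↔ ∃ k ≤ T, (M.conf w k).1 ∈ M.accept) ∧
    (w ∉ L → ∀ k : ℕ, (M.conf w k).1 ∉ M.accept)

/-- Time-space complexity: running time times `log₂` of the number of states. -/
noncomputable def TS {α : Type} (M : TwoDFA α) (T : ℕ) : ℝ :=
  (T : ℝ) * Real.logb 2 (M.Q : ℝ)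

end TwoDFA

/-- The word `x #^n y` over the alphabet `{0, 1, #}` (here `Option Bool`, with
`none` playing the role of `#`). -/
def encodePair (n : ℕ) (x y : Fin n → Bool) : List (Option Bool) :=
  (List.ofFn fun i => some (x i)) ++ List.replicate n none ++ (List.ofFn fun i => some (y i))

/-- The language `L_f(n) = { x #^n y : f(x,y) = 1 }`. -/
def Lf (n : ℕ) (f : (Fin n → Bool) → (Fin n → Bool) → Bool) : Set (List (Option Bool)) :=
  { w | ∃ x y, f x y = true ∧ w = encodePair n x y }

/-- The equality function `EQ_n`. -/
def EQfun (n : ℕ) : (Fin n → Bool) → (Fin n → Bool) → Bool := fun x y => decide (x = y)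

instance List.finite_length_le_subtype (β : Type) [Finite β] (m : ℕ) :
    Finite {l : List β // l.length ≤ m} :=
  (List.finite_length_le β m).to_subtype

theorem List.natCard_length_le_lt {β : Type} [Finite β] (hβ : 2 ≤ Nat.card β) (R : ℕ) :
    Nat.card {l : List β // l.length ≤ R} < 2 * Nat.card β ^ R := by
  have := Fintype.ofFinite β
  let f : {l : List β // l.length ≤ R} → Σ j : Fin (R + 1), List.Vector β j :=
    fun l => ⟨⟨l.1.length, Nat.lt_succ_of_le l.2⟩, ⟨l.1, rfl⟩⟩
  have hf : Function.Injective f := fun l l' h => Subtype.ext (congrArg (fun z => z.2.1) h)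
  calc Nat.card {l : List β // l.length ≤ R}
      ≤ Nat.card (Σ j : Fin (R + 1), List.Vector β j) := Nat.card_le_card_of_injective f hf
    _ = ∑ j ∈ Finset.range (R + 1), Nat.card β ^ j := by
      simp only [Nat.card_eq_fintype_card, Fintype.card_sigma, card_vector]
      exact Fin.sum_univ_eq_sum_range (fun j => Fintype.card β ^ j) (R + 1)
    _ < 2 * Nat.card β ^ R := by
      have := Nat.geomSum_lt hβ (s := Finset.range R) fun k hk => Finset.mem_range.1 hk
      rw [Finset.sum_range_succ]
      omega

namespace TwoDFA

variable {α : Type}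

theorem symbolAt_zero (w : List α) : symbolAt w 0 = .inr false := by
  simp [symbolAt]

theorem symbolAt_length_add_one (w : List α) : symbolAt w (w.length + 1) = .inr true := by
  simp [symbolAt]

theorem symbolAt_add_one {w : List α} {i : ℕ} (hi : i < w.length) :
    symbolAt w (i + 1) = .inl w[i] := by
  unfold symbolAt
  rw [if_neg (by omega), if_neg (by omega), show (i + 1 : ℤ).toNat - 1 = i by omega,
    List.getElem?_eq_getElem hi]

theorem symbolAt_append_left {u v v' : List α} (hv : v.length = v'.length) {p : ℤ}
    (hp : p ≤ u.length) : symbolAt (u ++ v) p = symbolAt (u ++ v') p := by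
  unfold symbolAt
  simp only [List.length_append, hv]
  split_ifs <;> try rfl
  rw [List.getElem?_append_left (by omega), List.getElem?_append_left (by omega)]

theorem symbolAt_append_right {u u' v : List α} (hu : u.length = u'.length) {p : ℤ}
    (hp : u.length < p) : symbolAt (u ++ v) p = symbolAt (u' ++ v) p := by
  unfold symbolAt
  simp only [List.length_append, hu]
  split_ifs <;> try rfl
  rw [List.getElem?_append_right (by omega), List.getElem?_append_right (by omega), hu]

variable (M : TwoDFA α)

theorem step_congr {w v : List α} {c : Fin M.Q × ℤ} (h : symbolAt w c.2 = symbolAt v c.2) :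
    M.step w c = M.step v c := by
  simp only [step, h]

theorem natAbs_step_sub_le (w : List α) (c : Fin M.Q × ℤ) :
    ((M.step w c).2 - c.2).natAbs ≤ 1 := by
  simpa [step] using M.hmove c.1 (symbolAt w c.2)

theorem natAbs_iterate_step_sub_le (w : List α) (c : Fin M.Q × ℤ) (t : ℕ) :
    (((M.step w)^[t] c).2 - c.2).natAbs ≤ t := by
  induction t with
  | zero => simp
  | succ t ih =>
    have := M.natAbs_step_sub_le w ((M.step w)^[t] c)
    rw [Function.iterate_succ_apply']
    omega

theorem iterate_step_congr {w v : List α} {P : ℤ → Prop}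
    (hwv : ∀ p, P p → symbolAt w p = symbolAt v p) {c : Fin M.Q × ℤ} {t : ℕ}
    (hP : ∀ u < t, P ((M.step v)^[u] c).2) : (M.step w)^[t] c = (M.step v)^[t] c := by
  induction t with
  | zero => rfl
  | succ t ih =>
    rw [Function.iterate_succ_apply', Function.iterate_succ_apply',
      ih fun u hu => hP u (by omega)]
    exact M.step_congr (hwv _ (hP t (by omega)))

section Crossing

variable (lo hi : ℤ)

def InRegion : Bool → ℤ → Prop
  | true, p => p ≤ hi
  | false, p => lo ≤ p

instance : ∀ s p, Decidable (InRegion lo hi s p)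
  | true, _ => inferInstanceAs (Decidable (_ ≤ _))
  | false, _ => inferInstanceAs (Decidable (_ ≤ _))

def exitPos : Bool → ℤ
  | true => hi + 1
  | false => lo - 1

/-- The head is owned by side `s`: side `true` sees positions `≤ hi`, side `false` positions
`≥ lo`. Ownership passes to the other side only when the head leaves the owner's region, and
the list records the state at each such transfer. -/
def transfers (w : List α) : ℕ → Fin M.Q × ℤ → Bool → List (Fin M.Q)
  | 0, _, _ => []
  | k + 1, c, s =>
    if InRegion lo hi s (M.step w c).2 then transfers w k (M.step w c) s
    else (M.step w c).1 :: transfers w k (M.step w c) (!s)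

variable {M lo hi}

theorem inRegion_exitPos (hlh : lo ≤ hi + 1) (s : Bool) :
    InRegion lo hi (!s) (exitPos lo hi s) := by
  cases s <;> simp only [InRegion, exitPos, Bool.not_true, Bool.not_false] <;> omega

theorem step_eq_exitPos {w : List α} {c : Fin M.Q × ℤ} {s : Bool} (hc : InRegion lo hi s c.2)
    (h : ¬ InRegion lo hi s (M.step w c).2) : (M.step w c).2 = exitPos lo hi s := by
  have := M.natAbs_step_sub_le w c
  cases s <;> simp only [InRegion, exitPos] at * <;> omega

theorem inRegion_of_transfers_eq_nil {w : List α} {k : ℕ} {c : Fin M.Q × ℤ} {s : Bool}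
    (hc : InRegion lo hi s c.2) (h : M.transfers lo hi w k c s = []) :
    ∀ u ≤ k, InRegion lo hi s ((M.step w)^[u] c).2 := by
  induction k generalizing c with
  | zero =>
    intro u hu
    obtain rfl : u = 0 := by omega
    exact hc
  | succ k ih =>
    rw [transfers] at h
    split_ifs at h with hin
    rintro (_ | u) hu
    · exact hc
    · rw [Function.iterate_succ_apply]
      exact ih hin h u (by omega)

theorem exists_of_transfers_eq_cons {w : List α} {k : ℕ} {c : Fin M.Q × ℤ} {s : Bool}
    {q : Fin M.Q} {L : List (Fin M.Q)} (hc : InRegion lo hi s c.2)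
    (h : M.transfers lo hi w k c s = q :: L) :
    ∃ t < k, (∀ u ≤ t, InRegion lo hi s ((M.step w)^[u] c).2) ∧
      (M.step w)^[t + 1] c = (q, exitPos lo hi s) ∧
      M.transfers lo hi w (k - (t + 1)) (q, exitPos lo hi s) (!s) = L := by
  induction k generalizing c with
  | zero => simp [transfers] at h
  | succ k ih =>
    rw [transfers] at h
    split_ifs at h with hin
    · obtain ⟨t, ht, hreg, hrun, hrest⟩ := ih hin h
      refine ⟨t + 1, by omega, ?_, by rwa [Function.iterate_succ_apply], by simpa using hrest⟩
      rintro (_ | u) hu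
      · exact hc
      · rw [Function.iterate_succ_apply]
        exact hreg u (by omega)
    · obtain ⟨rfl, rfl⟩ := List.cons.inj h
      have hexit : M.step w c = ((M.step w c).1, exitPos lo hi s) :=
        Prod.ext rfl (step_eq_exitPos hc hin)
      refine ⟨0, by omega, fun u hu => ?_, hexit, by rw [Nat.add_sub_cancel, ← hexit]⟩
      obtain rfl : u = 0 := by omega
      exact hc

theorem abs_exitPos_sub_add_mul_le_of_transfers_eq (hlh : lo ≤ hi + 1) {w : List α}
    (L : List (Fin M.Q)) :
    ∀ (c : Fin M.Q × ℤ) (s : Bool) (k : ℕ), InRegion lo hi s c.2 →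
      M.transfers lo hi w k c s = L → L ≠ [] →
      |exitPos lo hi s - c.2| + ((L.length : ℤ) - 1) * (hi - lo + 2) ≤ k := by
  induction L with
  | nil => intros; contradiction
  | cons q L ih =>
    intro c s k hc hL _
    obtain ⟨t, ht, -, hrun, hrest⟩ := exists_of_transfers_eq_cons hc hL
    have hfirst := M.natAbs_iterate_step_sub_le w c (t + 1)
    rw [hrun] at hfirst
    have hfirst' : |exitPos lo hi s - c.2| ≤ t + 1 := by rw [abs_le]; omega
    rcases eq_or_ne L [] with rfl | hne
    · simp only [List.length_singleton]
      push_cast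
      omega
    · have hrest := ih _ _ _ (inRegion_exitPos hlh s) hrest hne
      have hgap : |exitPos lo hi (!s) - exitPos lo hi s| = hi - lo + 2 := by
        rw [abs_eq (by omega)]
        cases s <;> simp only [exitPos, Bool.not_true, Bool.not_false] <;> omega
      rw [hgap, Nat.cast_sub ht] at hrest
      rw [List.length_cons]
      push_cast at hrest ⊢
      linear_combination hfirst' + hrest

/-- Cut and paste: `w` agrees with `v s` on the region of side `s`, so while side `s` owns the
head the run on `w` copies the run on `v s`; equal transfer lists make consecutive phases meet
in the same configuration. -/
theorem exists_accept_of_transfers_eq (hlh : lo ≤ hi + 1) {w : List α} {v : Bool → List α}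
    (hwv : ∀ s p, InRegion lo hi s p → symbolAt w p = symbolAt (v s) p) (L : List (Fin M.Q)) :
    ∀ (c : Fin M.Q × ℤ) (s : Bool) (k : Bool → ℕ), InRegion lo hi s c.2 →
      (∀ b, M.transfers lo hi (v b) (k b) c s = L) →
      (∀ b, ((M.step (v b))^[k b] c).1 ∈ M.accept) →
      ∃ m, ((M.step w)^[m] c).1 ∈ M.accept := by
  induction L with
  | nil =>
    intro c s k hc hL hacc
    refine ⟨k s, ?_⟩
    rw [M.iterate_step_congr (hwv s) fun u hu => inRegion_of_transfers_eq_nil hc (hL s) u hu.le]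
    exact hacc s
  | cons q L ih =>
    intro c s k hc hL hacc
    choose t ht hreg hrun hrest using fun b => exists_of_transfers_eq_cons hc (hL b)
    obtain ⟨m, hm⟩ := ih (q, exitPos lo hi s) (!s) (fun b => k b - (t b + 1))
      (inRegion_exitPos hlh s) hrest fun b => by
        have := hacc b
        rwa [← Nat.sub_add_cancel (ht b : t b + 1 ≤ k b), Function.iterate_add_apply,
          hrun b] at this
    refine ⟨m + (t s + 1), ?_⟩
    rwa [Function.iterate_add_apply,
      M.iterate_step_congr (hwv s) fun u hu => hreg s u (by omega), hrun s]

end Crossing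

section OfFinite

variable {S : Type} [Finite S]

open Classical in
noncomputable def ofFinite (init : S) (accept : Set S) (δ : S → α ⊕ Bool → S × ℤ)
    (hδ : ∀ q a, (δ q a).2.natAbs ≤ 1) : TwoDFA α :=
  { Q := Nat.card S
    hQ := Finite.card_pos_iff.2 ⟨init⟩
    init := Finite.equivFin S init
    accept := Finset.univ.filter fun q => (Finite.equivFin S).symm q ∈ accept
    δ := fun q a => Prod.map (Finite.equivFin S) id (δ ((Finite.equivFin S).symm q) a)
    hmove := fun _ _ => hδ _ _ }

def stepOf (δ : S → α ⊕ Bool → S × ℤ) (w : List α) (c : S × ℤ) : S × ℤ :=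
  ((δ c.1 (symbolAt w c.2)).1, c.2 + (δ c.1 (symbolAt w c.2)).2)

theorem mem_accept_conf_ofFinite {init : S} {accept : Set S} {δ : S → α ⊕ Bool → S × ℤ}
    {hδ : ∀ q a, (δ q a).2.natAbs ≤ 1} (w : List α) (k : ℕ) :
    ((ofFinite init accept δ hδ).conf w k).1 ∈ (ofFinite init accept δ hδ).accept ↔
      ((stepOf δ w)^[k] (init, 0)).1 ∈ accept := by
  have hsemi : Function.Semiconj (Prod.map (Finite.equivFin S) id) (stepOf δ w)
      ((ofFinite init accept δ hδ).step w) := by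
    rintro ⟨q, p⟩
    simp [step, stepOf, ofFinite]
  have hconf : (ofFinite init accept δ hδ).conf w k =
      Prod.map (Finite.equivFin S) id ((stepOf δ w)^[k] (init, 0)) :=
    (hsemi.iterate_right k (init, 0)).symm
  have hacc (q : Fin (ofFinite init accept δ hδ).Q) :
      q ∈ (ofFinite init accept δ hδ).accept ↔ (Finite.equivFin S).symm q ∈ accept :=
    by classical exact Finset.mem_filter.trans (and_iff_right (Finset.mem_univ _))
  rw [hconf, hacc, Prod.map_fst, Equiv.symm_apply_apply]

end OfFinite

section Memory

variable (L : Set (List α)) (m : ℕ)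

open Classical in
noncomputable def memoryδ : Bool ⊕ {l : List α // l.length ≤ m} → α ⊕ Bool →
    (Bool ⊕ {l : List α // l.length ≤ m}) × ℤ
  | .inl b, _ => (.inl b, 0)
  | .inr l, .inr false => (.inr l, 1)
  | .inr l, .inr true => (.inl (decide (l.1 ∈ L)), 0)
  | .inr l, .inl a =>
    if h : l.1.length < m then (.inr ⟨l.1 ++ [a], by simpa using h⟩, 1) else (.inl false, 0)

theorem natAbs_memoryδ_le (q : Bool ⊕ {l : List α // l.length ≤ m}) (a : α ⊕ Bool) :
    (memoryδ L m q a).2.natAbs ≤ 1 := by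
  rcases q with _ | l <;> rcases a with _ | _ | _ <;> simp only [memoryδ] <;> try split
  all_goals simp

noncomputable def memoryDFA [Finite α] : TwoDFA α :=
  ofFinite (S := Bool ⊕ {l : List α // l.length ≤ m}) (.inr ⟨[], m.zero_le⟩) {.inl true}
    (memoryδ L m) (natAbs_memoryδ_le L m)

variable {L m}

theorem iterate_stepOf_memoryδ {w : List α} {k : ℕ} (hk : k ≤ min w.length m + 1) :
    (stepOf (memoryδ L m) w)^[k] (Sum.inr ⟨[], m.zero_le⟩, 0) =
      (Sum.inr ⟨w.take (k - 1), (List.length_take_le _ _).trans (by omega)⟩, (k : ℤ)) := by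
  induction k with
  | zero => rfl
  | succ k ih =>
    rw [Function.iterate_succ_apply', ih (by omega)]
    rcases k with _ | j
    · simp [stepOf, symbolAt_zero, memoryδ]
    · have hj : j < w.length := by omega
      have hsym : symbolAt w ((j + 1 : ℕ) : ℤ) = .inl w[j] := by
        exact_mod_cast symbolAt_add_one hj
      simp only [stepOf, hsym, memoryδ, Nat.add_sub_cancel, List.length_take,
        show min j w.length < m by omega, dite_true]
      exact Prod.ext (congrArg Sum.inr (Subtype.ext (List.take_succ_eq_append_getElem hj).symm))
        (by push_cast; ring)

theorem iterate_stepOf_memoryδ_inl (w : List α) (b : Bool) (p : ℤ) (j : ℕ) :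
    (stepOf (memoryδ L m) w)^[j] (.inl b, p) = (.inl b, p) := by
  induction j with
  | zero => rfl
  | succ j ih => rw [Function.iterate_succ_apply', ih]; simp [stepOf, memoryδ]

theorem iterate_stepOf_memoryδ_fst_eq_inl_true_iff (w : List α) (k : ℕ) :
    ((stepOf (memoryδ L m) w)^[k] (Sum.inr ⟨[], m.zero_le⟩, 0)).1 = .inl true ↔
      w ∈ L ∧ w.length ≤ m ∧ w.length + 2 ≤ k := by
  by_cases hk : k ≤ min w.length m + 1
  · rw [iterate_stepOf_memoryδ hk]
    simp only [reduceCtorEq, false_iff]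
    omega
  obtain ⟨j, rfl⟩ : ∃ j, k = j + 1 + (min w.length m + 1) :=
    ⟨k - (min w.length m + 2), by omega⟩
  rw [Function.iterate_add_apply, iterate_stepOf_memoryδ le_rfl, Function.iterate_succ_apply]
  by_cases hw : w.length ≤ m
  · have hlen : w.length + 2 ≤ j + 1 + (min w.length m + 1) := by omega
    simp only [min_eq_left hw] at hlen ⊢
    simp only [Nat.add_sub_cancel, List.take_length, stepOf, Nat.cast_add, Nat.cast_one,
      symbolAt_length_add_one, memoryδ, iterate_stepOf_memoryδ_inl]
    simp [hw, hlen]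
  · have hm : m < w.length := by omega
    simp only [min_eq_right hm.le]
    simp only [Nat.add_sub_cancel, stepOf, Nat.cast_add, Nat.cast_one, symbolAt_add_one hm,
      memoryδ, List.length_take, min_eq_left hm.le, lt_irrefl, dite_false,
      iterate_stepOf_memoryδ_inl]
    simp [hw]

theorem recognizes_memoryDFA [Finite α] (hL : ∀ w ∈ L, w.length ≤ m) :
    (memoryDFA L m).Recognizes L (m + 2) := by
  intro w
  have hacc : ∀ k, ((memoryDFA L m).conf w k).1 ∈ (memoryDFA L m).accept ↔
      w ∈ L ∧ w.length ≤ m ∧ w.length + 2 ≤ k := fun k =>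
    (mem_accept_conf_ofFinite w k).trans
      (Set.mem_singleton_iff.trans (iterate_stepOf_memoryδ_fst_eq_inl_true_iff w k))
  simp only [hacc]
  refine ⟨⟨fun hw => ?_, fun ⟨_, _, hw, _⟩ => hw⟩, fun hw _ ⟨hw', _⟩ => hw hw'⟩
  exact ⟨w.length + 2, by have := hL w hw; omega, hw, hL w hw, le_rfl⟩

theorem Q_memoryDFA [Finite α] :
    (memoryDFA L m).Q = 2 + Nat.card {l : List α // l.length ≤ m} := by
  simp [memoryDFA, ofFinite, Nat.card_sum]

end Memory

theorem two_le_Q_of_recognizes {M : TwoDFA α} {L : Set (List α)} {T : ℕ}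
    (hM : M.Recognizes L T) {w w' : List α} (hw : w ∈ L) (hw' : w' ∉ L) : 2 ≤ M.Q := by
  by_contra hQ
  obtain ⟨k, -, hk⟩ := ((hM w).1).1 hw
  have hsame : (M.conf w' 0).1 = (M.conf w k).1 := by
    have := (M.conf w' 0).1.isLt
    have := (M.conf w k).1.isLt
    ext; omega
  exact (hM w').2 hw' 0 (hsame ▸ hk)

theorem TS_le_of_Q_le_two_pow {M : TwoDFA α} {T e : ℕ} (hQ : M.Q ≤ 2 ^ e) :
    M.TS T ≤ T * e := by
  have hlog : Real.logb 2 M.Q ≤ e := by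
    calc Real.logb 2 M.Q ≤ Real.logb 2 (2 ^ e : ℕ) :=
          Real.logb_le_logb_of_le (by norm_num) (by exact_mod_cast M.hQ) (by exact_mod_cast hQ)
      _ = e := by
        rw [Nat.cast_pow, Nat.cast_ofNat, Real.logb_pow, Real.logb_self_eq_one (by norm_num),
          mul_one]
  exact mul_le_mul_of_nonneg_left hlog (Nat.cast_nonneg T)

end TwoDFA

theorem sq_le_mul_logb {n Q R T : ℕ} (hQ : 2 ≤ Q) (hcount : 2 ^ n < 2 * Q ^ R)
    (hT : R = 0 ∨ n + (n + 1) * R ≤ T) : (n : ℝ) ^ 2 ≤ T * Real.logb 2 Q := by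
  have hL : 1 ≤ Real.logb 2 Q := by
    rw [Real.le_logb_iff_rpow_le (by norm_num) (by positivity)]
    exact_mod_cast (by simpa using hQ)
  rcases Nat.eq_zero_or_pos n with rfl | hn
  · simpa using mul_nonneg (Nat.cast_nonneg T) (zero_le_one.trans hL)
  rcases hT with rfl | hT
  · exact absurd hcount (by simpa using hn.ne')
  have hlog : (n : ℝ) ≤ 1 + R * Real.logb 2 Q := by
    have := Real.logb_le_logb_of_le (b := 2) (by norm_num) (by positivity)
      (by exact_mod_cast hcount.le : ((2 ^ n : ℕ) : ℝ) ≤ ((2 * Q ^ R : ℕ) : ℝ))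
    push_cast at this
    rwa [Real.logb_mul (by norm_num) (by positivity), Real.logb_pow, Real.logb_pow,
      Real.logb_self_eq_one (by norm_num), mul_one] at this
  have hT' : (n : ℝ) + (n + 1) * R ≤ T := by exact_mod_cast hT
  have hn' : (1 : ℝ) ≤ n := by exact_mod_cast hn
  nlinarith [mul_le_mul_of_nonneg_right hT' (by linarith : (0 : ℝ) ≤ Real.logb 2 Q)]

section EncodePair

variable {n : ℕ}

theorem length_encodePair (x y : Fin n → Bool) : (encodePair n x y).length = 3 * n := by
  simp [encodePair]
  omega

theorem encodePair_injective {x y x' y' : Fin n → Bool}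
    (h : encodePair n x y = encodePair n x' y') : x = x' ∧ y = y' := by
  obtain ⟨hxz, hy⟩ := List.append_inj h (by simp)
  obtain ⟨hx, -⟩ := List.append_inj hxz (by simp)
  exact ⟨funext fun i => Option.some.inj (congrFun (List.ofFn_inj.mp hx) i),
    funext fun i => Option.some.inj (congrFun (List.ofFn_inj.mp hy) i)⟩

theorem encodePair_mem_Lf_EQfun_iff {x y : Fin n → Bool} :
    encodePair n x y ∈ Lf n (EQfun n) ↔ x = y := by
  constructor
  · rintro ⟨x', y', hxy', he⟩
    obtain ⟨rfl, rfl⟩ := encodePair_injective he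
    exact of_decide_eq_true hxy'
  · rintro rfl
    exact ⟨x, x, decide_eq_true rfl, rfl⟩

theorem length_of_mem_Lf {f : (Fin n → Bool) → (Fin n → Bool) → Bool}
    {w : List (Option Bool)} (hw : w ∈ Lf n f) : w.length = 3 * n := by
  obtain ⟨x, y, -, rfl⟩ := hw
  exact length_encodePair x y

theorem symbolAt_encodePair_of_le (x y y' : Fin n → Bool) {p : ℤ} (hp : p ≤ 2 * n) :
    TwoDFA.symbolAt (encodePair n x y) p = TwoDFA.symbolAt (encodePair n x y') p :=
  TwoDFA.symbolAt_append_left (by simp) (by simp; omega)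

theorem symbolAt_encodePair_of_lt (x x' y : Fin n → Bool) {p : ℤ} (hp : n < p) :
    TwoDFA.symbolAt (encodePair n x y) p = TwoDFA.symbolAt (encodePair n x' y) p := by
  simp only [encodePair, List.append_assoc]
  exact TwoDFA.symbolAt_append_right (by simp) (by simpa using hp)

end EncodePair

namespace TwoDFA

variable {n : ℕ} (M : TwoDFA (Option Bool))

theorem transfers_eq_nil_or_add_mul_length_le (w : List (Option Bool)) (k : ℕ) :
    M.transfers (n + 1) (2 * n) w k (M.init, 0) true = [] ∨
      n + (n + 1) * (M.transfers (n + 1) (2 * n) w k (M.init, 0) true).length ≤ k := by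
  refine or_iff_not_imp_left.2 fun hne => ?_
  have := M.abs_exitPos_sub_add_mul_le_of_transfers_eq (lo := n + 1) (hi := 2 * n) (by omega) _
    (M.init, 0) true k (by simp [InRegion]) rfl hne
  simp only [exitPos, sub_zero] at this
  rw [abs_of_nonneg (by positivity)] at this
  zify
  linear_combination this

theorem eq_of_transfers_encodePair_eq {T : ℕ} (hM : M.Recognizes (Lf n (EQfun n)) T)
    {x y : Fin n → Bool} {kx ky : ℕ} (hx : (M.conf (encodePair n x x) kx).1 ∈ M.accept)
    (hy : (M.conf (encodePair n y y) ky).1 ∈ M.accept)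
    (h : M.transfers (n + 1) (2 * n) (encodePair n x x) kx (M.init, 0) true =
      M.transfers (n + 1) (2 * n) (encodePair n y y) ky (M.init, 0) true) : x = y := by
  by_contra hne
  obtain ⟨m, hm⟩ := M.exists_accept_of_transfers_eq (lo := n + 1) (hi := 2 * n) (by omega)
    (w := encodePair n x y) (v := fun b => bif b then encodePair n x x else encodePair n y y)
    (by
      rintro (_ | _) p hp <;> simp only [InRegion, cond_true, cond_false] at hp ⊢
      · exact symbolAt_encodePair_of_lt x y y (by omega)
      · exact symbolAt_encodePair_of_le x y x hp)
    _ (M.init, 0) true (fun b => bif b then kx else ky) (by simp [InRegion])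
    (by rintro (_ | _); exacts [h.symm, rfl]) (by rintro (_ | _); exacts [hy, hx])
  exact (hM _).2 (mt encodePair_mem_Lf_EQfun_iff.1 hne) m hm

theorem sq_le_TS_of_recognizes_EQ {T : ℕ} (hM : M.Recognizes (Lf n (EQfun n)) T) :
    (n : ℝ) ^ 2 ≤ M.TS T := by
  choose k hkT hk using fun x : Fin n → Bool =>
    ((hM (encodePair n x x)).1).1 (encodePair_mem_Lf_EQfun_iff.2 rfl)
  set τ : (Fin n → Bool) → List (Fin M.Q) := fun x =>
    M.transfers (n + 1) (2 * n) (encodePair n x x) (k x) (M.init, 0) true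
  have hτ : Function.Injective τ := fun x y h =>
    M.eq_of_transfers_encodePair_eq hM (hk x) (hk y) h
  obtain ⟨x₀, -, hx₀⟩ := Finset.exists_max_image Finset.univ (fun x => (τ x).length)
    Finset.univ_nonempty
  have hQ : 2 ≤ M.Q := two_le_Q_of_recognizes hM (encodePair_mem_Lf_EQfun_iff.2 rfl)
    (w := encodePair n x₀ x₀) (w' := [none]) fun h => by
      have := length_of_mem_Lf h; simp at this; omega
  have hcount : 2 ^ n < 2 * M.Q ^ (τ x₀).length :=
    calc 2 ^ n = Nat.card (Fin n → Bool) := by simp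
      _ ≤ Nat.card {l : List (Fin M.Q) // l.length ≤ (τ x₀).length} :=
        Nat.card_le_card_of_injective (fun x => ⟨τ x, hx₀ x (Finset.mem_univ x)⟩)
          fun x y h => hτ (congrArg Subtype.val h)
      _ < 2 * M.Q ^ (τ x₀).length := by
        simpa using List.natCard_length_le_lt (β := Fin M.Q) (by simpa using hQ) _
  refine sq_le_mul_logb hQ hcount ?_
  rcases M.transfers_eq_nil_or_add_mul_length_le _ (k x₀) with h | h
  · exact .inl (List.length_eq_zero_iff.2 h)
  · exact .inr (h.trans (hkT x₀))

theorem Q_memoryDFA_option_bool_le (L : Set (List (Option Bool))) (hn : 1 ≤ n) :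
    (memoryDFA L (3 * n)).Q ≤ 2 ^ (7 * n) := by
  have hcard := List.natCard_length_le_lt (β := Option Bool) (by simp) (3 * n)
  have h27 : 3 ^ (3 * n) ≤ 2 ^ (5 * n) := by
    rw [pow_mul, pow_mul]
    exact Nat.pow_le_pow_left (by norm_num) n
  have h4 : 4 * 2 ^ (5 * n) ≤ 2 ^ (7 * n) := by
    rw [show 7 * n = 2 + 5 * n + 2 * (n - 1) by omega, pow_add, pow_add]
    exact Nat.le_mul_of_pos_right _ (by positivity)
  rw [show Nat.card (Option Bool) = 3 by simp] at hcard
  rw [Q_memoryDFA]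
  omega

end TwoDFA

/-- `TS_{2DFA}(L_EQ(n)) = Θ(n²)`: there is a 2DFA recognizing
`L_EQ(n)` in time `O(n)` with `2^{O(n)}` states (hence `TS = O(n²)`), and every
2DFA recognizing `L_EQ(n)` has `TS ≥ n (D^cc(EQ_n) − 1) = n²`. -/
theorem TS_LEQ_theta_n_sq :
    ∃ C : ℕ, 0 < C ∧ ∀ n : ℕ, 1 ≤ n →
      (∃ (M : TwoDFA (Option Bool)) (T : ℕ),
        M.Recognizes (Lf n (EQfun n)) T ∧ T ≤ C * n ∧ M.Q ≤ 2 ^ (C * n) ∧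
        M.TS T ≤ (C : ℝ) * (n : ℝ) ^ 2) ∧
      (∀ (M : TwoDFA (Option Bool)) (T : ℕ),
        M.Recognizes (Lf n (EQfun n)) T → (n : ℝ) ^ 2 ≤ M.TS T) := by
  refine ⟨35, by norm_num, fun n hn => ⟨?_, fun M T hM => M.sq_le_TS_of_recognizes_EQ hM⟩⟩
  have hQ := TwoDFA.Q_memoryDFA_option_bool_le (Lf n (EQfun n)) hn
  refine ⟨TwoDFA.memoryDFA (Lf n (EQfun n)) (3 * n), 3 * n + 2,
    TwoDFA.recognizes_memoryDFA fun w hw => (length_of_mem_Lf hw).le, by omega,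
    hQ.trans (Nat.pow_le_pow_right (by norm_num) (by omega)), ?_⟩
  calc _ ≤ ((3 * n + 2 : ℕ) : ℝ) * ((7 * n : ℕ) : ℝ) := TwoDFA.TS_le_of_Q_le_two_pow hQ
    _ ≤ 35 * (n : ℝ) ^ 2 := by
      have hn' : (1 : ℝ) ≤ n := by exact_mod_cast hn
      push_cast
      nlinarith
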